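/- Let ℋ₁ and ℋ₂ be complex Hilbert spaces, with anti-dual spaces (conj ℋ_j)' (the spaces of continuous anti-linear functionals on ℋ_j) and Riesz isometric isomorphisms E_j : (conj ℋ_j)' → ℋ_j determined by ⟨f, u⟩ = (E_j f, u)_{ℋ_j} for all u ∈ ℋ_j. Suppose Y : ℋ₁ → ℋ₂ and Z : (conj ℋ₂)' → (conj ℋ₁)' are densely defined operators forming a formally adjoint pair, i.e. ⟨f, Yu⟩ = ⟨Zf, u⟩ for all u ∈ dom(Y) and f ∈ dom(Z). Let 𝒯 be the operator on ℋ₁ ⊕ ℋ₂ with domain dom(Y) ⊕ E₂(dom(Z)) given by 𝒯(u₁, u₂) = (E₁ Z E₂⁻¹ u₂, Y u₁). Then the following are equivalent: (i) Y and Z form an essentially adjoint pair, i.e. the closure of Y equals the true adjoint Z' of Z and the closure of Z equals the true adjoint Y' of Y; (ii) 𝒯 is essentially self-adjoint on dom(Y) ⊕ E₂(dom(Z)). -/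

import Mathlib

/-!
Everything is phrased through graphs. Transported by the Riesz maps, `Z` becomes
`A = E₁ Z E₂⁻¹ : ℋ₂ → ℋ₁`, and `Z'`, `Y'` become the adjoint graphs `(graph A)^*`, `(graph Y)^*`
(`Submodule.adjoint`), so that `(Y, Z)` is an essentially adjoint pair iff
`closure (graph Y) = (graph A)^*` and `closure (graph A) = (graph Y)^*`. Up to a reshuffling of
coordinates, `graph 𝒯 = graph Y × graph A`, whose adjoint is `(graph A)^* × (graph Y)^*` and whose
closure is `closure (graph Y) × closure (graph A)`; hence `𝒯̄ = 𝒯^*` is the same pair of equalities.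
Formal adjointness puts each of `graph Y`, `graph A`, `graph 𝒯` inside a closed adjoint graph,
which is a graph because its partner is densely defined; so `Y`, `Z`, `𝒯` are closable.
-/

open scoped InnerProductSpace

namespace Submodule

theorem topologicalClosure_map_continuousLinearEquiv {R M M₂ : Type*} [Semiring R]
    [TopologicalSpace M] [AddCommMonoid M] [Module R M] [ContinuousAdd M] [ContinuousConstSMul R M]
    [TopologicalSpace M₂] [AddCommMonoid M₂] [Module R M₂] [ContinuousAdd M₂]
    [ContinuousConstSMul R M₂] (e : M ≃L[R] M₂) (s : Submodule R M) :
    (s.map (e : M →ₗ[R] M₂)).topologicalClosure = s.topologicalClosure.map (e : M →ₗ[R] M₂) :=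
  SetLike.coe_injective <| by
    simpa [topologicalClosure_coe] using (e.toHomeomorph.image_closure (s : Set M)).symm

theorem topologicalClosure_prod {R M M₂ : Type*} [Semiring R]
    [TopologicalSpace M] [AddCommMonoid M] [Module R M] [ContinuousAdd M] [ContinuousConstSMul R M]
    [TopologicalSpace M₂] [AddCommMonoid M₂] [Module R M₂] [ContinuousAdd M₂]
    [ContinuousConstSMul R M₂] (s : Submodule R M) (t : Submodule R M₂) :
    (s.prod t).topologicalClosure = s.topologicalClosure.prod t.topologicalClosure :=
  SetLike.coe_injective <| by simp [topologicalClosure_coe, prod_coe, closure_prod_eq]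

theorem prod_eq_prod_iff {R M M₂ : Type*} [Semiring R] [AddCommMonoid M] [Module R M]
    [AddCommMonoid M₂] [Module R M₂] {s s' : Submodule R M} {t t' : Submodule R M₂} :
    s.prod t = s'.prod t' ↔ s = s' ∧ t = t' := by
  simp only [← SetLike.coe_set_eq, prod_coe]
  exact Set.prod_eq_prod_iff_of_nonempty ⟨0, s.zero_mem, t.zero_mem⟩

section Adjoint

variable {𝕜 E F : Type*} [RCLike 𝕜]
  [NormedAddCommGroup E] [InnerProductSpace 𝕜 E] [NormedAddCommGroup F] [InnerProductSpace 𝕜 F]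

theorem mem_adjoint_iff' {g : Submodule 𝕜 (E × F)} {x : F × E} :
    x ∈ g.adjoint ↔ ∀ p ∈ g, ⟪p.2, x.1⟫_𝕜 = ⟪p.1, x.2⟫_𝕜 := by
  simp [Prod.forall, sub_eq_zero]

theorem isClosed_adjoint (g : Submodule 𝕜 (E × F)) : IsClosed (g.adjoint : Set (F × E)) := by
  rw [Submodule.adjoint, map_coe, LinearEquiv.coe_coe, LinearEquiv.image_eq_preimage_symm]
  exact (isClosed_orthogonal _).preimage (WithLp.prod_continuous_toLp _ _ _)

theorem adjoint_topologicalClosure (g : Submodule 𝕜 (E × F)) :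
    g.topologicalClosure.adjoint = g.adjoint := by
  refine le_antisymm (fun x hx => mem_adjoint_iff'.2 fun p hp =>
    mem_adjoint_iff'.1 hx p (g.le_topologicalClosure hp)) fun x hx => mem_adjoint_iff'.2 ?_
  have hclosed : IsClosed {p : E × F | ⟪p.2, x.1⟫_𝕜 = ⟪p.1, x.2⟫_𝕜} :=
    isClosed_eq (continuous_snd.inner continuous_const) (continuous_fst.inner continuous_const)
  exact fun p hp => closure_minimal (mem_adjoint_iff'.1 hx) hclosed
    ((g.topologicalClosure_coe) ▸ hp)

theorem le_adjoint_symm {g : Submodule 𝕜 (E × F)} {h : Submodule 𝕜 (F × E)}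
    (hgh : g ≤ h.adjoint) : h ≤ g.adjoint := fun q hq => mem_adjoint_iff'.2 fun p hp => by
  rw [← inner_conj_symm, ← mem_adjoint_iff'.1 (hgh hp) q hq, inner_conj_symm]

theorem eq_zero_of_mk_zero_mem_adjoint {g : Submodule 𝕜 (E × F)}
    (hg : Dense (g.map (LinearMap.fst 𝕜 E F) : Set E)) {y : E} (hy : (0, y) ∈ g.adjoint) :
    y = 0 := by
  refine hg.eq_zero_of_inner_right 𝕜 fun a ha => ?_
  obtain ⟨p, hp, rfl⟩ := mem_map.1 ha
  simpa using (mem_adjoint_iff'.1 hy p hp).symm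

end Adjoint

end Submodule

namespace LinearPMap

theorem forall_mem_graph {R E F : Type*} [Ring R] [AddCommGroup E] [AddCommGroup F] [Module R E]
    [Module R F] {f : E →ₗ.[R] F} {P : E × F → Prop} :
    (∀ p ∈ f.graph, P p) ↔ ∀ x : f.domain, P (x, f x) := by
  refine ⟨fun h x => h _ (f.mem_graph x), fun h ⟨_, _⟩ hp => ?_⟩
  obtain ⟨x, rfl, rfl⟩ := (mem_graph_iff f).1 hp
  exact h x

theorem isClosable_of_graph_le {R E F : Type*} [CommRing R] [AddCommGroup E] [AddCommGroup F]
    [Module R E] [Module R F] [TopologicalSpace E] [TopologicalSpace F] [ContinuousAdd E]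
    [ContinuousAdd F] [TopologicalSpace R] [ContinuousSMul R E] [ContinuousSMul R F]
    {f : E →ₗ.[R] F} {S : Submodule R (E × F)} (hS : _root_.IsClosed (S : Set (E × F)))
    (hS₀ : ∀ y, (0, y) ∈ S → y = 0) (hf : f.graph ≤ S) : f.IsClosable := by
  have hcl := f.graph.topologicalClosure_minimal hf hS
  refine ⟨_, (Submodule.toLinearPMap_graph_eq _ fun x hx hx₁ => ?_).symm⟩
  exact hS₀ x.2 (hx₁ ▸ hcl hx)

variable {𝕜 E F : Type*} [RCLike 𝕜]
  [NormedAddCommGroup E] [InnerProductSpace 𝕜 E] [NormedAddCommGroup F] [InnerProductSpace 𝕜 F]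

theorem isClosable_of_graph_le_adjoint {f : E →ₗ.[𝕜] F} {g : Submodule 𝕜 (F × E)}
    (hg : Dense (g.map (LinearMap.fst 𝕜 F E) : Set F)) (hf : f.graph ≤ g.adjoint) :
    f.IsClosable :=
  isClosable_of_graph_le g.isClosed_adjoint
    (fun _ => Submodule.eq_zero_of_mk_zero_mem_adjoint hg) hf

theorem isSelfAdjoint_closure_iff [CompleteSpace E] {T : E →ₗ.[𝕜] E}
    (hT : Dense (T.domain : Set E)) (hTc : T.IsClosable) :
    IsSelfAdjoint T.closure ↔ T.graph.adjoint = T.graph.topologicalClosure := by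
  rw [isSelfAdjoint_def, ← T.graph.adjoint_topologicalClosure, hTc.graph_closure_eq_closure_graph,
    ← adjoint_graph_eq_graph_adjoint (hT.mono T.le_closure.1)]
  exact ⟨congrArg graph, eq_of_eq_graph⟩

end LinearPMap

section BlockOperator

variable (𝕜 E F : Type*) [RCLike 𝕜]
  [NormedAddCommGroup E] [InnerProductSpace 𝕜 E] [NormedAddCommGroup F] [InnerProductSpace 𝕜 F]

noncomputable def blockGraphEquiv :
    ((E × F) × (F × E)) ≃L[𝕜] WithLp 2 (E × F) × WithLp 2 (E × F) :=
  ((ContinuousLinearEquiv.prodProdProdComm 𝕜 E F F E).trans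
    ((ContinuousLinearEquiv.refl 𝕜 (E × F)).prodCongr (ContinuousLinearEquiv.prodComm 𝕜 F E))).trans
    ((WithLp.prodContinuousLinearEquiv 2 𝕜 E F).symm.prodCongr
      (WithLp.prodContinuousLinearEquiv 2 𝕜 E F).symm)

variable {𝕜 E F}

@[simp]
theorem blockGraphEquiv_apply (p : E × F) (q : F × E) :
    blockGraphEquiv 𝕜 E F (p, q) = (WithLp.toLp 2 (p.1, q.1), WithLp.toLp 2 (q.2, p.2)) :=
  rfl

/-- The graph of the block operator `(u₁, u₂) ↦ (A u₂, Y u₁)` when `g` and `h` are the graphs of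
`Y : E → F` and `A : F → E`. -/
noncomputable def blockGraph (g : Submodule 𝕜 (E × F)) (h : Submodule 𝕜 (F × E)) :
    Submodule 𝕜 (WithLp 2 (E × F) × WithLp 2 (E × F)) :=
  (g.prod h).map (blockGraphEquiv 𝕜 E F : ((E × F) × (F × E)) →ₗ[𝕜] _)

theorem blockGraphEquiv_mem_blockGraph {g : Submodule 𝕜 (E × F)} {h : Submodule 𝕜 (F × E)}
    {p : E × F} {q : F × E} : blockGraphEquiv 𝕜 E F (p, q) ∈ blockGraph g h ↔ p ∈ g ∧ q ∈ h := by
  simp only [blockGraph, Submodule.mem_map_equiv, ContinuousLinearEquiv.coe_symm_toLinearEquiv,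
    ContinuousLinearEquiv.symm_apply_apply, Submodule.mem_prod]

theorem forall_mem_blockGraph {g : Submodule 𝕜 (E × F)} {h : Submodule 𝕜 (F × E)}
    {P : WithLp 2 (E × F) × WithLp 2 (E × F) → Prop} :
    (∀ x ∈ blockGraph g h, P x) ↔ ∀ p q, p ∈ g → q ∈ h → P (blockGraphEquiv 𝕜 E F (p, q)) := by
  simp only [(blockGraphEquiv 𝕜 E F).surjective.forall, Prod.forall, blockGraphEquiv_mem_blockGraph,
    and_imp]

theorem adjoint_blockGraph (g : Submodule 𝕜 (E × F)) (h : Submodule 𝕜 (F × E)) :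
    (blockGraph g h).adjoint = blockGraph h.adjoint g.adjoint := by
  ext x
  obtain ⟨⟨r, s⟩, rfl⟩ := (blockGraphEquiv 𝕜 E F).surjective x
  rw [blockGraphEquiv_mem_blockGraph, Submodule.mem_adjoint_iff', forall_mem_blockGraph,
    Submodule.mem_adjoint_iff', Submodule.mem_adjoint_iff']
  simp only [blockGraphEquiv_apply, WithLp.prod_inner_apply]
  constructor
  · intro H
    exact ⟨fun q hq => by simpa using H 0 q (zero_mem _) hq,
      fun p hp => by simpa using H p 0 hp (zero_mem _)⟩
  · rintro ⟨Hr, Hs⟩ p q hp hq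
    rw [Hr q hq, Hs p hp, add_comm]

theorem topologicalClosure_blockGraph (g : Submodule 𝕜 (E × F)) (h : Submodule 𝕜 (F × E)) :
    (blockGraph g h).topologicalClosure = blockGraph g.topologicalClosure h.topologicalClosure := by
  rw [blockGraph, Submodule.topologicalClosure_map_continuousLinearEquiv,
    Submodule.topologicalClosure_prod, blockGraph]

theorem blockGraph_inj {g g' : Submodule 𝕜 (E × F)} {h h' : Submodule 𝕜 (F × E)} :
    blockGraph g h = blockGraph g' h' ↔ g = g' ∧ h = h' := by
  rw [blockGraph, blockGraph,
    (Submodule.map_injective_of_injective (blockGraphEquiv 𝕜 E F).injective).eq_iff,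
    Submodule.prod_eq_prod_iff]

theorem adjoint_blockGraph_eq_topologicalClosure_iff (g : Submodule 𝕜 (E × F))
    (h : Submodule 𝕜 (F × E)) :
    (blockGraph g h).adjoint = (blockGraph g h).topologicalClosure ↔
      g.topologicalClosure = h.adjoint ∧ h.topologicalClosure = g.adjoint := by
  rw [adjoint_blockGraph, topologicalClosure_blockGraph, blockGraph_inj, eq_comm,
    @eq_comm _ g.adjoint]

end BlockOperator

namespace LinearPMap

variable {𝕜 E F E' F' : Type*} [RCLike 𝕜]
  [NormedAddCommGroup E] [InnerProductSpace 𝕜 E] [NormedAddCommGroup F] [InnerProductSpace 𝕜 F]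
  [NormedAddCommGroup E'] [NormedSpace 𝕜 E'] [NormedAddCommGroup F'] [NormedSpace 𝕜 F']

/-- The graph of `e₁ ∘ Z ∘ e₂⁻¹`. -/
def conjGraph (Z : F' →ₗ.[𝕜] E') (e₂ : F' ≃L[𝕜] F) (e₁ : E' ≃L[𝕜] E) : Submodule 𝕜 (F × E) :=
  Z.graph.map (e₂.prodCongr e₁ : (F' × E') →ₗ[𝕜] F × E)

variable {Z : F' →ₗ.[𝕜] E'} {e₂ : F' ≃L[𝕜] F} {e₁ : E' ≃L[𝕜] E}

theorem mem_conjGraph {p : F × E} :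
    p ∈ Z.conjGraph e₂ e₁ ↔ ∃ f : Z.domain, (e₂ f, e₁ (Z f)) = p := by
  constructor
  · rintro ⟨⟨_, _⟩, hfg, rfl⟩
    obtain ⟨f, rfl, rfl⟩ := (mem_graph_iff Z).1 hfg
    exact ⟨f, rfl⟩
  · rintro ⟨f, rfl⟩
    exact ⟨_, Z.mem_graph f, rfl⟩

theorem prodCongr_mem_conjGraph {f : F'} {g : E'} :
    (e₂ f, e₁ g) ∈ Z.conjGraph e₂ e₁ ↔ (f, g) ∈ Z.graph := by
  change e₂.prodCongr e₁ (f, g) ∈ Z.conjGraph e₂ e₁ ↔ _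
  simp only [conjGraph, Submodule.mem_map_equiv, ContinuousLinearEquiv.coe_symm_toLinearEquiv,
    ContinuousLinearEquiv.symm_apply_apply]

theorem conjGraph_map_fst :
    (Z.conjGraph e₂ e₁).map (LinearMap.fst 𝕜 F E) = Z.domain.map (e₂ : F' →ₗ[𝕜] F) := by
  rw [conjGraph, ← Submodule.map_comp, ← graph_map_fst_eq_domain, ← Submodule.map_comp]
  rfl

theorem topologicalClosure_conjGraph (hZ : Z.IsClosable) :
    (Z.conjGraph e₂ e₁).topologicalClosure = Z.closure.conjGraph e₂ e₁ := by
  rw [conjGraph, Submodule.topologicalClosure_map_continuousLinearEquiv,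
    hZ.graph_closure_eq_closure_graph, conjGraph]

theorem isClosable_of_conjGraph_le_adjoint {g : Submodule 𝕜 (E × F)}
    (hg : Dense (g.map (LinearMap.fst 𝕜 E F) : Set E)) (h : Z.conjGraph e₂ e₁ ≤ g.adjoint) :
    Z.IsClosable := by
  refine isClosable_of_graph_le (g.isClosed_adjoint.preimage (e₂.prodCongr e₁).continuous)
    (fun y hy => ?_) (Submodule.map_le_iff_le_comap.1 h)
  have : (0, e₁ y) ∈ g.adjoint := by simpa using hy
  simpa using Submodule.eq_zero_of_mk_zero_mem_adjoint hg this

theorem graph_eq_blockGraph {T : WithLp 2 (E × F) →ₗ.[𝕜] WithLp 2 (E × F)} {Y : E →ₗ.[𝕜] F}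
    (hTdom : T.domain = (Y.domain.prod (Z.domain.map (e₂ : F' →ₗ[𝕜] F))).comap
      (WithLp.linearEquiv 2 𝕜 (E × F)).toLinearMap)
    (hTapp : ∀ (x : T.domain) (h₁ : (WithLp.equiv 2 (E × F) x).1 ∈ Y.domain)
      (h₂ : e₂.symm (WithLp.equiv 2 (E × F) x).2 ∈ Z.domain),
      T x = (WithLp.equiv 2 (E × F)).symm (e₁ (Z ⟨_, h₂⟩), Y ⟨_, h₁⟩)) :
    T.graph = blockGraph Y.graph (Z.conjGraph e₂ e₁) := by
  have hdom : ∀ x ∈ T.domain,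
      ∃ (u : Y.domain) (f : Z.domain), WithLp.toLp 2 ((u : E), e₂ f) = x := by
    intro x hx
    rw [hTdom] at hx
    obtain ⟨hu, f, hf, hfx⟩ := hx
    exact ⟨⟨_, hu⟩, ⟨f, hf⟩, congrArg (fun a => WithLp.toLp 2 (_, a)) hfx⟩
  have happ : ∀ (u : Y.domain) (f : Z.domain), ∃ hx : WithLp.toLp 2 ((u : E), e₂ f) ∈ T.domain,
      T ⟨_, hx⟩ = WithLp.toLp 2 (e₁ (Z f), Y u) := by
    intro u f
    have hx : WithLp.toLp 2 ((u : E), e₂ f) ∈ T.domain := by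
      rw [hTdom]
      exact ⟨u.2, f, f.2, rfl⟩
    refine ⟨hx, ?_⟩
    rw [hTapp ⟨_, hx⟩ u.2 (by simp)]
    simp
  apply le_antisymm
  · rintro ⟨_, _⟩ hxy
    obtain ⟨⟨x, hx⟩, rfl, rfl⟩ := (mem_graph_iff T).1 hxy
    obtain ⟨u, f, rfl⟩ := hdom x hx
    obtain ⟨_, hTuf⟩ := happ u f
    refine ⟨(((u : E), Y u), (e₂ f, e₁ (Z f))), ⟨Y.mem_graph u, mem_conjGraph.2 ⟨f, rfl⟩⟩, ?_⟩
    simp [hTuf]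
  · refine forall_mem_blockGraph.2 fun ⟨_, _⟩ q hp hq => ?_
    obtain ⟨u, rfl, rfl⟩ := (mem_graph_iff Y).1 hp
    obtain ⟨f, rfl⟩ := mem_conjGraph.1 hq
    obtain ⟨hx, hTuf⟩ := happ u f
    exact (mem_graph_iff T).2 ⟨⟨_, hx⟩, rfl, hTuf⟩

end LinearPMap

section RieszConjugation

open LinearPMap

variable {H₁ H₂ : Type*} [NormedAddCommGroup H₁] [InnerProductSpace ℂ H₁]
  [NormedAddCommGroup H₂] [InnerProductSpace ℂ H₂]
  {E₁ : (H₁ →L⋆[ℂ] ℂ) ≃ₗᵢ[ℂ] H₁} {E₂ : (H₂ →L⋆[ℂ] ℂ) ≃ₗᵢ[ℂ] H₂}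
  {Y : H₁ →ₗ.[ℂ] H₂} {Z : (H₂ →L⋆[ℂ] ℂ) →ₗ.[ℂ] (H₁ →L⋆[ℂ] ℂ)}

theorem mem_adjoint_conjGraph_iff (hE₁ : ∀ (f : H₁ →L⋆[ℂ] ℂ) (u : H₁), f u = ⟪u, E₁ f⟫_ℂ)
    (hE₂ : ∀ (f : H₂ →L⋆[ℂ] ℂ) (u : H₂), f u = ⟪u, E₂ f⟫_ℂ) {u : H₁} {w : H₂} :
    (u, w) ∈ (Z.conjGraph E₂.toContinuousLinearEquiv E₁.toContinuousLinearEquiv).adjoint ↔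
      ∀ f : Z.domain, (f : H₂ →L⋆[ℂ] ℂ) w = Z f u := by
  simp only [Submodule.mem_adjoint_iff', mem_conjGraph, forall_exists_index,
    forall_apply_eq_imp_iff, LinearIsometryEquiv.coe_toContinuousLinearEquiv]
  refine forall_congr' fun f => ?_
  rw [hE₂, hE₁, ← inner_conj_symm u, ← inner_conj_symm w, (starRingEnd ℂ).injective.eq_iff,
    eq_comm]

theorem prodCongr_mem_adjoint_graph_iff (hE₁ : ∀ (f : H₁ →L⋆[ℂ] ℂ) (u : H₁), f u = ⟪u, E₁ f⟫_ℂ)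
    (hE₂ : ∀ (f : H₂ →L⋆[ℂ] ℂ) (u : H₂), f u = ⟪u, E₂ f⟫_ℂ) {f : H₂ →L⋆[ℂ] ℂ}
    {g : H₁ →L⋆[ℂ] ℂ} :
    (E₂ f, E₁ g) ∈ Y.graph.adjoint ↔ ∀ u : Y.domain, f (Y u) = g u := by
  simp only [Submodule.mem_adjoint_iff', forall_mem_graph, hE₁, hE₂]

theorem closure_graph_eq_adjoint_conjGraph_iff
    (hE₁ : ∀ (f : H₁ →L⋆[ℂ] ℂ) (u : H₁), f u = ⟪u, E₁ f⟫_ℂ)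
    (hE₂ : ∀ (f : H₂ →L⋆[ℂ] ℂ) (u : H₂), f u = ⟪u, E₂ f⟫_ℂ) (hY : Y.IsClosable) :
    (∀ (u : H₁) (w : H₂), (u, w) ∈ Y.closure.graph ↔
        ∀ f : Z.domain, (f : H₂ →L⋆[ℂ] ℂ) w = (Z f) u) ↔
      Y.graph.topologicalClosure =
        (Z.conjGraph E₂.toContinuousLinearEquiv E₁.toContinuousLinearEquiv).adjoint := by
  rw [hY.graph_closure_eq_closure_graph, SetLike.ext_iff, Prod.forall]
  simp only [mem_adjoint_conjGraph_iff hE₁ hE₂]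

theorem closure_conjGraph_eq_adjoint_graph_iff
    (hE₁ : ∀ (f : H₁ →L⋆[ℂ] ℂ) (u : H₁), f u = ⟪u, E₁ f⟫_ℂ)
    (hE₂ : ∀ (f : H₂ →L⋆[ℂ] ℂ) (u : H₂), f u = ⟪u, E₂ f⟫_ℂ) (hZ : Z.IsClosable) :
    (∀ (f : H₂ →L⋆[ℂ] ℂ) (g : H₁ →L⋆[ℂ] ℂ), (f, g) ∈ Z.closure.graph ↔
        ∀ u : Y.domain, f (Y u) = g (u : H₁)) ↔
      (Z.conjGraph E₂.toContinuousLinearEquiv E₁.toContinuousLinearEquiv).topologicalClosure =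
        Y.graph.adjoint := by
  rw [topologicalClosure_conjGraph hZ, SetLike.ext_iff,
    (E₂.toContinuousLinearEquiv.prodCongr E₁.toContinuousLinearEquiv).surjective.forall,
    Prod.forall]
  simp only [ContinuousLinearEquiv.prodCongr_apply, prodCongr_mem_conjGraph]
  simp only [LinearIsometryEquiv.coe_toContinuousLinearEquiv,
    prodCongr_mem_adjoint_graph_iff hE₁ hE₂]

end RieszConjugation

/-- Abstract criterion for essentially adjoint pairs: let `Y : ℋ₁ → ℋ₂` and
`Z : (conj ℋ₂)' → (conj ℋ₁)'` (where the anti-dual `(conj ℋ)'` is realized as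
the space `ℋ →L⋆[ℂ] ℂ` of continuous anti-linear functionals) be densely defined
operators forming a formally adjoint pair `⟨f, Yu⟩ = ⟨Zf, u⟩`, and let
`E_j : (conj ℋ_j)' ≃ ℋ_j` be the Riesz isometric isomorphisms, determined by
`⟨f, u⟩ = (E_j f, u)`.  Then `Y` and `Z` form an essentially adjoint pair
(the closure of each one is the true adjoint of the other, expressed here through
graphs) if and only if the operator `𝒯(u₁, u₂) = (E₁ Z E₂⁻¹ u₂, Y u₁)` with domain
`dom(Y) ⊕ E₂(dom Z)` is essentially self-adjoint on `ℋ₁ ⊕ ℋ₂`. -/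
theorem essentially_adjoint_pair_iff_block_selfadjoint {H₁ H₂ : Type*}
    [NormedAddCommGroup H₁] [InnerProductSpace ℂ H₁] [CompleteSpace H₁]
    [NormedAddCommGroup H₂] [InnerProductSpace ℂ H₂] [CompleteSpace H₂]
    (E₁ : (H₁ →L⋆[ℂ] ℂ) ≃ₗᵢ[ℂ] H₁) (E₂ : (H₂ →L⋆[ℂ] ℂ) ≃ₗᵢ[ℂ] H₂)
    (hE₁ : ∀ (f : H₁ →L⋆[ℂ] ℂ) (u : H₁), f u = ⟪u, E₁ f⟫_ℂ)
    (hE₂ : ∀ (f : H₂ →L⋆[ℂ] ℂ) (u : H₂), f u = ⟪u, E₂ f⟫_ℂ)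
    (Y : H₁ →ₗ.[ℂ] H₂) (Z : (H₂ →L⋆[ℂ] ℂ) →ₗ.[ℂ] (H₁ →L⋆[ℂ] ℂ))
    (hY : Dense (Y.domain : Set H₁))
    (hZ : Dense (Z.domain : Set (H₂ →L⋆[ℂ] ℂ)))
    (hYZ : ∀ (u : Y.domain) (f : Z.domain),
      (f : H₂ →L⋆[ℂ] ℂ) (Y u) = (Z f) (u : H₁))
    (T : WithLp 2 (H₁ × H₂) →ₗ.[ℂ] WithLp 2 (H₁ × H₂))
    (hTdom : T.domain =
      (Y.domain.prod (Z.domain.map E₂.toLinearEquiv.toLinearMap)).comap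
        (WithLp.linearEquiv 2 ℂ (H₁ × H₂)).toLinearMap)
    (hTapp : ∀ (x : T.domain)
      (h₁ : (WithLp.equiv 2 (H₁ × H₂) (x : WithLp 2 (H₁ × H₂))).1 ∈ Y.domain)
      (h₂ : E₂.symm (WithLp.equiv 2 (H₁ × H₂) (x : WithLp 2 (H₁ × H₂))).2 ∈ Z.domain),
      T x = (WithLp.equiv 2 (H₁ × H₂)).symm
        (E₁ (Z ⟨E₂.symm (WithLp.equiv 2 (H₁ × H₂) (x : WithLp 2 (H₁ × H₂))).2, h₂⟩),
         Y ⟨(WithLp.equiv 2 (H₁ × H₂) (x : WithLp 2 (H₁ × H₂))).1, h₁⟩)) :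
    ((∀ (u : H₁) (w : H₂), (u, w) ∈ Y.closure.graph ↔
        ∀ f : Z.domain, (f : H₂ →L⋆[ℂ] ℂ) w = (Z f) u) ∧
     (∀ (f : H₂ →L⋆[ℂ] ℂ) (g : H₁ →L⋆[ℂ] ℂ), (f, g) ∈ Z.closure.graph ↔
        ∀ u : Y.domain, f (Y u) = g (u : H₁))) ↔
    IsSelfAdjoint T.closure := by
  set A := Z.conjGraph E₂.toContinuousLinearEquiv E₁.toContinuousLinearEquiv
  have hYA : Y.graph ≤ A.adjoint :=
    LinearPMap.forall_mem_graph.2 fun u => (mem_adjoint_conjGraph_iff hE₁ hE₂).2 (hYZ u)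
  have hAY : A ≤ Y.graph.adjoint := Submodule.le_adjoint_symm hYA
  have hT : T.graph = blockGraph Y.graph A := LinearPMap.graph_eq_blockGraph hTdom hTapp
  have hZdense : Dense ((Z.domain.map E₂.toLinearEquiv.toLinearMap : Submodule ℂ H₂) : Set H₂) := by
    rw [Submodule.map_coe]
    exact E₂.surjective.denseRange.dense_image E₂.continuous hZ
  have hAdense : Dense (A.map (LinearMap.fst ℂ H₂ H₁) : Set H₂) := by
    rwa [LinearPMap.conjGraph_map_fst]
  have hTdense : Dense (T.domain : Set (WithLp 2 (H₁ × H₂))) := by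
    rw [hTdom, Submodule.comap_coe, Submodule.prod_coe]
    exact (hY.prod hZdense).preimage
      (WithLp.prodContinuousLinearEquiv 2 ℂ H₁ H₂).toHomeomorph.isOpenMap
  have hTT : T.graph ≤ T.graph.adjoint := by
    rw [hT, adjoint_blockGraph]
    exact Submodule.map_mono (Submodule.prod_mono hYA hAY)
  rw [closure_graph_eq_adjoint_conjGraph_iff hE₁ hE₂
      (LinearPMap.isClosable_of_graph_le_adjoint hAdense hYA),
    closure_conjGraph_eq_adjoint_graph_iff hE₁ hE₂
      (LinearPMap.isClosable_of_conjGraph_le_adjoint (Y.graph_map_fst_eq_domain ▸ hY) hAY),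
    LinearPMap.isSelfAdjoint_closure_iff hTdense
      (LinearPMap.isClosable_of_graph_le_adjoint (T.graph_map_fst_eq_domain ▸ hTdense) hTT),
    hT, adjoint_blockGraph_eq_topologicalClosure_iff]
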